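/- arXiv:2101.02473 — 2 statements merged into one kernel-verified Lean document; each statement's English description precedes it below -/
import Mathlib

section
/- Let a₁, a₂ > 0 and set α = (a₂² + 1)/(a₁² + 1), so that the function f : ℝ → ℝ defined by f(y) = 1/(a₁² + y²) for |y| ≤ 1 and f(y) = α/(a₂² + y²) for |y| > 1 is continuous on ℝ. Then the principal value h(x) := PV∫_ℝ f(y)/(x−y) dy (which exists for every x ∈ (−1,1)) has a finite one-sided limit as x → 1⁻, namely lim_{x→1⁻} h(x) = 2·arctan(1/a₁)/(a₁·(a₁² + 1)) + 2α·arctan(a₂)/(a₂·(a₂² + 1)). -/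
/-!
Partial fractions, `(a² + x²) / ((a² + y²)(x - y)) = 1 / (x - y) + (x + y) / (a² + y²)`, give
an explicit primitive of the kernel `1 / ((a² + y²)(x - y))`, whose only singularity is
`-log |x - y| / (a² + x²)`. In the symmetric excision `|y - x| > ε` these logarithms cancel, so
the principal value exists and equals a regular function of `x` plus
`(1 / (a₁² + x²) - α / (a₂² + x²)) · log |(x + 1) / (x - 1)|`. The choice of `α` makes this
coefficient vanish at `x = 1`; being differentiable there, it is `O(x - 1)`, and
`(x - 1) log |x - 1| → 0`.
-/

open MeasureTheory Filter Set Topology Real Bornology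

noncomputable def lorentzKernel (a x y : ℝ) : ℝ := ((a ^ 2 + y ^ 2) * (x - y))⁻¹

noncomputable def lorentzPrimitiveReg (a x y : ℝ) : ℝ :=
  log (a ^ 2 + y ^ 2) / 2 + x / a * arctan (y / a)

/-- Since `Real.log` is `log |·|`, this is a primitive of `lorentzKernel a x` on both sides of
`x`. -/
noncomputable def lorentzPrimitive (a x y : ℝ) : ℝ :=
  (a ^ 2 + x ^ 2)⁻¹ * (lorentzPrimitiveReg a x y - log (x - y))

section

variable {a x : ℝ}

lemma hasDerivAt_lorentzPrimitiveReg (ha : a ≠ 0) (y : ℝ) :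
    HasDerivAt (lorentzPrimitiveReg a x) ((x + y) / (a ^ 2 + y ^ 2)) y := by
  have hy : a ^ 2 + y ^ 2 ≠ 0 := by positivity
  have hlog : HasDerivAt (fun y => log (a ^ 2 + y ^ 2)) (2 * y / (a ^ 2 + y ^ 2)) y := by
    simpa using ((hasDerivAt_pow 2 y).const_add (a ^ 2)).log hy
  have harctan : HasDerivAt (fun y => arctan (y / a)) (1 / (1 + (y / a) ^ 2) * (1 / a)) y :=
    ((hasDerivAt_id' y).div_const a).arctan
  refine ((hlog.div_const 2).add (harctan.const_mul (x / a))).congr_deriv ?_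
  field_simp
  ring

lemma hasDerivAt_lorentzPrimitive (ha : a ≠ 0) {y : ℝ} (hy : y ≠ x) :
    HasDerivAt (lorentzPrimitive a x) (lorentzKernel a x y) y := by
  have hxy : x - y ≠ 0 := sub_ne_zero.2 hy.symm
  have hlog : HasDerivAt (fun y => log (x - y)) (-1 / (x - y)) y := by
    simpa using ((hasDerivAt_id y).const_sub x).log hxy
  refine (((hasDerivAt_lorentzPrimitiveReg (x := x) ha y).sub hlog).const_mul
    (a ^ 2 + x ^ 2)⁻¹).congr_deriv ?_
  have : a ^ 2 + y ^ 2 ≠ 0 := by positivity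
  have : a ^ 2 + x ^ 2 ≠ 0 := by positivity
  simp only [lorentzKernel]
  field_simp
  ring

lemma continuous_lorentzPrimitiveReg (ha : a ≠ 0) : Continuous (lorentzPrimitiveReg a x) :=
  continuous_iff_continuousAt.2 fun y => (hasDerivAt_lorentzPrimitiveReg ha y).continuousAt

lemma tendsto_log_sq_add_sq_sub_log_cobounded (ha : a ≠ 0) :
    Tendsto (fun y => log (a ^ 2 + y ^ 2) / 2 - log (x - y)) (cobounded ℝ) (𝓝 0) := by
  set g : ℝ → ℝ := fun t => log ((a ^ 2 * t ^ 2 + 1) / (x * t - 1) ^ 2) / 2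
  have hg : Tendsto g (𝓝 0) (𝓝 0) := by
    have : ContinuousAt g 0 :=
      ((continuousAt_log (by norm_num)).comp (by fun_prop (disch := norm_num))).div_const 2
    simpa [g] using this.tendsto
  refine (hg.comp tendsto_inv₀_cobounded).congr' ?_
  filter_upwards [eventually_ne_cobounded 0, eventually_ne_cobounded x] with y hy0 hyx
  have hxy : x - y ≠ 0 := sub_ne_zero.2 (Ne.symm hyx)
  have : (a ^ 2 * y⁻¹ ^ 2 + 1) / (x * y⁻¹ - 1) ^ 2 = (a ^ 2 + y ^ 2) / (x - y) ^ 2 := by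
    field_simp
  simp only [g, Function.comp_apply, this]
  rw [log_div (by positivity) (by positivity), log_pow]
  push_cast
  ring

lemma tendsto_lorentzPrimitive_atTop (ha : 0 < a) :
    Tendsto (lorentzPrimitive a x) atTop (𝓝 ((a ^ 2 + x ^ 2)⁻¹ * (x / a * (π / 2)))) := by
  have harctan : Tendsto (fun y => arctan (y / a)) atTop (𝓝 (π / 2)) :=
    (tendsto_arctan_atTop.mono_right nhdsWithin_le_nhds).comp (tendsto_id.atTop_div_const ha)
  have := (((tendsto_log_sq_add_sq_sub_log_cobounded ha.ne' (x := x)).mono_left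
    IsOrderBornology.atTop_le_cobounded).add (harctan.const_mul (x / a))).const_mul
    (a ^ 2 + x ^ 2)⁻¹
  rw [zero_add] at this
  refine this.congr fun y => ?_
  simp only [lorentzPrimitive, lorentzPrimitiveReg]
  ring

lemma tendsto_lorentzPrimitive_atBot (ha : 0 < a) :
    Tendsto (lorentzPrimitive a x) atBot (𝓝 (-((a ^ 2 + x ^ 2)⁻¹ * (x / a * (π / 2))))) := by
  have harctan : Tendsto (fun y => arctan (y / a)) atBot (𝓝 (-(π / 2))) :=
    (tendsto_arctan_atBot.mono_right nhdsWithin_le_nhds).comp (tendsto_id.atBot_div_const ha)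
  have := (((tendsto_log_sq_add_sq_sub_log_cobounded ha.ne' (x := x)).mono_left
    IsOrderBornology.atBot_le_cobounded).add (harctan.const_mul (x / a))).const_mul
    (a ^ 2 + x ^ 2)⁻¹
  rw [zero_add, mul_neg, mul_neg] at this
  refine this.congr fun y => ?_
  simp only [lorentzPrimitive, lorentzPrimitiveReg]
  ring

lemma continuousOn_lorentzKernel (ha : a ≠ 0) {s : Set ℝ} (hs : x ∉ s) :
    ContinuousOn (lorentzKernel a x) s := by
  refine ContinuousOn.inv₀ (by fun_prop) fun y hy => ?_
  have : x - y ≠ 0 := sub_ne_zero.2 fun h => hs (h ▸ hy)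
  positivity

lemma integrable_inv_sq_add_sq (ha : a ≠ 0) : Integrable fun y : ℝ => (a ^ 2 + y ^ 2)⁻¹ := by
  refine ((integrable_inv_one_add_sq.comp_div ha).const_mul (a ^ 2)⁻¹).congr
    (.of_forall fun y => ?_)
  simp only
  field_simp

lemma integrableOn_lorentzKernel (ha : a ≠ 0) {s : Set ℝ} (hs : MeasurableSet s) {δ : ℝ}
    (hδ : 0 < δ) (hsx : ∀ y ∈ s, δ ≤ |x - y|) : IntegrableOn (lorentzKernel a x) s := by
  have hxs : x ∉ s := fun hx => by simpa [hδ.not_ge] using hsx x hx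
  refine (((integrable_inv_sq_add_sq ha).const_mul δ⁻¹).integrableOn).mono'
    ((continuousOn_lorentzKernel ha hxs).aestronglyMeasurable hs) ?_
  refine (ae_restrict_iff' hs).2 (.of_forall fun y hy => ?_)
  have := hsx y hy
  rw [norm_eq_abs, lorentzKernel, abs_inv, abs_mul, abs_of_pos (by positivity), mul_inv,
    mul_comm]
  gcongr

lemma integral_Iio_lorentzKernel (ha : 0 < a) {b : ℝ} (hb : b < x) :
    ∫ y in Iio b, lorentzKernel a x y
      = lorentzPrimitive a x b + (a ^ 2 + x ^ 2)⁻¹ * (x / a * (π / 2)) := by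
  rw [← integral_Iic_eq_integral_Iio, integral_Iic_of_hasDerivAt_of_tendsto'
    (fun y hy => hasDerivAt_lorentzPrimitive ha.ne' (by grind))
    (integrableOn_lorentzKernel ha.ne' measurableSet_Iic (sub_pos.2 hb) fun y hy => ?_)
    (tendsto_lorentzPrimitive_atBot ha), sub_neg_eq_add]
  rw [abs_of_pos (by grind)]
  grind

lemma integral_Ioi_lorentzKernel (ha : 0 < a) {b : ℝ} (hb : x < b) :
    ∫ y in Ioi b, lorentzKernel a x y
      = (a ^ 2 + x ^ 2)⁻¹ * (x / a * (π / 2)) - lorentzPrimitive a x b :=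
  integral_Ioi_of_hasDerivAt_of_tendsto'
    (fun y hy => hasDerivAt_lorentzPrimitive ha.ne' (by grind))
    (integrableOn_lorentzKernel ha.ne' measurableSet_Ioi (sub_pos.2 hb) fun y hy => by
      rw [abs_sub_comm, abs_of_pos (by grind)]; grind)
    (tendsto_lorentzPrimitive_atTop ha)

lemma integral_Ioo_lorentzKernel (ha : a ≠ 0) {b c : ℝ} (hbc : b ≤ c) (hx : x ∉ Icc b c) :
    ∫ y in Ioo b c, lorentzKernel a x y = lorentzPrimitive a x c - lorentzPrimitive a x b := by
  rw [← integral_Ioc_eq_integral_Ioo, ← intervalIntegral.integral_of_le hbc]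
  rw [← uIcc_of_le hbc] at hx
  exact intervalIntegral.integral_eq_sub_of_hasDerivAt
    (fun y hy => hasDerivAt_lorentzPrimitive ha fun h => hx (h ▸ hy))
    (continuousOn_lorentzKernel ha hx).intervalIntegrable

/-- The singular terms `log ε` and `log (-ε)` cancel exactly. -/
lemma tendsto_lorentzPrimitive_sub_sub_add (ha : a ≠ 0) :
    Tendsto (fun ε => lorentzPrimitive a x (x - ε) - lorentzPrimitive a x (x + ε))
      (𝓝 0) (𝓝 0) := by
  have hcont : Continuous fun ε =>
      (a ^ 2 + x ^ 2)⁻¹ * (lorentzPrimitiveReg a x (x - ε) - lorentzPrimitiveReg a x (x + ε)) := by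
    have := continuous_lorentzPrimitiveReg ha (x := x)
    fun_prop
  convert hcont.tendsto 0 using 2 with ε
  · simp only [lorentzPrimitive, sub_sub_cancel, sub_add_cancel_left, log_neg_eq_log]
    ring
  · simp

end

lemma div_sq_add_sq_div_sub (a c x y : ℝ) :
    c / (a ^ 2 + y ^ 2) / (x - y) = c * lorentzKernel a x y := by
  rw [lorentzKernel, div_div, div_eq_mul_inv]

lemma setOf_lt_abs_sub_eq (x ε : ℝ) : {y : ℝ | ε < |y - x|} = Iio (x - ε) ∪ Ioi (x + ε) := by
  ext y
  simp only [mem_ofPred_eq, mem_union, mem_Iio, mem_Ioi, lt_abs]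
  grind

lemma setIntegral_Iio_union_Ioi {f : ℝ → ℝ} {p l r q : ℝ} (hpl : p ≤ l) (hlr : l ≤ r)
    (hrq : r ≤ q) (h₁ : IntegrableOn f (Iio p)) (h₂ : IntegrableOn f (Ico p l))
    (h₃ : IntegrableOn f (Ioc r q)) (h₄ : IntegrableOn f (Ioi q)) :
    ∫ y in Iio l ∪ Ioi r, f y
      = (∫ y in Iio p, f y) + (∫ y in Ico p l, f y)
        + ((∫ y in Ioc r q, f y) + ∫ y in Ioi q, f y) := by
  have hdisj : Disjoint (Iio p ∪ Ico p l) (Ioc r q ∪ Ioi q) := by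
    rw [Iio_union_Ico_eq_Iio hpl, Ioc_union_Ioi_eq_Ioi hrq]
    exact (Iio_disjoint_Ici hlr).mono_right Ioi_subset_Ici_self
  rw [← Iio_union_Ico_eq_Iio hpl, ← Ioc_union_Ioi_eq_Ioi hrq,
    setIntegral_union hdisj (measurableSet_Ioc.union measurableSet_Ioi) (h₁.union h₂)
      (h₃.union h₄),
    setIntegral_union (Iio_disjoint_Ici le_rfl |>.mono_right Ico_subset_Ici_self)
      measurableSet_Ico h₁ h₂,
    setIntegral_union Ioc_disjoint_Ioi_same measurableSet_Ioi h₃ h₄]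

/-- `α` times the integral of the `a₂`-kernel over `|y| > 1`, plus the finite part of the
`a₁`-kernel over `[-1, 1]`. -/
noncomputable def piecewisePV (a₁ a₂ α x : ℝ) : ℝ :=
  α * (lorentzPrimitive a₂ x (-1) - lorentzPrimitive a₂ x 1 + (a₂ ^ 2 + x ^ 2)⁻¹ * (x / a₂ * π))
    + (lorentzPrimitive a₁ x 1 - lorentzPrimitive a₁ x (-1))

lemma integral_truncated_eq (a₁ a₂ α : ℝ) (h₁ : 0 < a₁) (h₂ : 0 < a₂) {x ε : ℝ} (hε : 0 < ε)
    (hl : -1 < x - ε) (hr : x + ε < 1) :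
    ∫ y in {y : ℝ | ε < |y - x|},
        (if |y| ≤ 1 then 1 / (a₁ ^ 2 + y ^ 2) else α / (a₂ ^ 2 + y ^ 2)) / (x - y)
      = piecewisePV a₁ a₂ α x
        + (lorentzPrimitive a₁ x (x - ε) - lorentzPrimitive a₁ x (x + ε)) := by
  set F := fun y : ℝ =>
    (if |y| ≤ 1 then 1 / (a₁ ^ 2 + y ^ 2) else α / (a₂ ^ 2 + y ^ 2)) / (x - y)
  have hIio : EqOn F (fun y => α * lorentzKernel a₂ x y) (Iio (-1)) := fun y hy => by
    have : 1 < |y| := lt_abs.2 (Or.inr (by linarith [mem_Iio.1 hy]))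
    simp only [F, if_neg this.not_ge, div_sq_add_sq_div_sub]
  have hIoi : EqOn F (fun y => α * lorentzKernel a₂ x y) (Ioi 1) := fun y hy => by
    have : 1 < |y| := lt_abs.2 (Or.inl (mem_Ioi.1 hy))
    simp only [F, if_neg this.not_ge, div_sq_add_sq_div_sub]
  have hIco : EqOn F (lorentzKernel a₁ x) (Ico (-1) (x - ε)) := fun y hy => by
    simp only [F, if_pos (abs_le.2 ⟨hy.1, by linarith [hy.2]⟩), div_sq_add_sq_div_sub, one_mul]
  have hIoc : EqOn F (lorentzKernel a₁ x) (Ioc (x + ε) 1) := fun y hy => by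
    simp only [F, if_pos (abs_le.2 ⟨by linarith [hy.1], hy.2⟩), div_sq_add_sq_div_sub, one_mul]
  have hleft : ∀ y < x - ε, ε ≤ |x - y| := fun y hy => by
    rw [abs_of_pos (by linarith)]; linarith
  have hright : ∀ y, x + ε < y → ε ≤ |x - y| := fun y hy => by
    rw [abs_of_neg (by linarith)]; linarith
  have i₁ : IntegrableOn F (Iio (-1)) :=
    IntegrableOn.congr_fun ((integrableOn_lorentzKernel h₂.ne' measurableSet_Iio hε fun y hy =>
      hleft y (by linarith [mem_Iio.1 hy])).const_mul α) hIio.symm measurableSet_Iio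
  have i₂ : IntegrableOn F (Ico (-1) (x - ε)) :=
    (integrableOn_lorentzKernel h₁.ne' measurableSet_Ico hε fun y hy =>
      hleft y hy.2).congr_fun hIco.symm measurableSet_Ico
  have i₃ : IntegrableOn F (Ioc (x + ε) 1) :=
    (integrableOn_lorentzKernel h₁.ne' measurableSet_Ioc hε fun y hy =>
      hright y hy.1).congr_fun hIoc.symm measurableSet_Ioc
  have i₄ : IntegrableOn F (Ioi 1) :=
    IntegrableOn.congr_fun ((integrableOn_lorentzKernel h₂.ne' measurableSet_Ioi hε fun y hy =>
      hright y (by linarith [mem_Ioi.1 hy])).const_mul α) hIoi.symm measurableSet_Ioi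
  rw [setOf_lt_abs_sub_eq, setIntegral_Iio_union_Ioi hl.le (by linarith) hr.le i₁ i₂ i₃ i₄,
    setIntegral_congr_fun measurableSet_Iio hIio, setIntegral_congr_fun measurableSet_Ico hIco,
    setIntegral_congr_fun measurableSet_Ioc hIoc, setIntegral_congr_fun measurableSet_Ioi hIoi,
    integral_const_mul, integral_const_mul, integral_Iio_lorentzKernel h₂ (by linarith),
    integral_Ioi_lorentzKernel h₂ (by linarith), integral_Ico_eq_integral_Ioo,
    integral_Ioc_eq_integral_Ioo, integral_Ioo_lorentzKernel h₁.ne' hl.le fun h => by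
      linarith [h.2],
    integral_Ioo_lorentzKernel h₁.ne' hr.le fun h => by linarith [h.1], piecewisePV]
  ring

lemma tendsto_integral_truncated (a₁ a₂ α : ℝ) (h₁ : 0 < a₁) (h₂ : 0 < a₂) {x : ℝ}
    (hx : x ∈ Ioo (-1 : ℝ) 1) :
    Tendsto (fun ε : ℝ => ∫ y in {y : ℝ | ε < |y - x|},
        (if |y| ≤ 1 then 1 / (a₁ ^ 2 + y ^ 2) else α / (a₂ ^ 2 + y ^ 2)) / (x - y))
      (𝓝[>] 0) (𝓝 (piecewisePV a₁ a₂ α x)) := by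
  have hlim := (tendsto_lorentzPrimitive_sub_sub_add h₁.ne' (x := x)).const_add
    (piecewisePV a₁ a₂ α x)
  rw [add_zero] at hlim
  refine (tendsto_nhdsWithin_of_tendsto_nhds hlim).congr' ?_
  have hδ : 0 < min (x + 1) (1 - x) := lt_min (by linarith [hx.1]) (by linarith [hx.2])
  filter_upwards [Ioo_mem_nhdsGT hδ] with ε hε
  have := lt_min_iff.1 hε.2
  exact (integral_truncated_eq a₁ a₂ α h₁ h₂ hε.1 (by linarith) (by linarith)).symm

lemma tendsto_mul_log_sub_of_hasDerivAt {c : ℝ → ℝ} {c' a : ℝ} (hc : HasDerivAt c c' a)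
    (hca : c a = 0) : Tendsto (fun x => c x * log (x - a)) (𝓝[≠] a) (𝓝 0) := by
  have hmul_log : Tendsto (fun x => (x - a) * log (x - a)) (𝓝[≠] a) (𝓝 0) := by
    have : ContinuousAt (fun x => (x - a) * log (x - a)) a :=
      continuous_mul_log.continuousAt.comp (f := fun x => x - a) (by fun_prop)
    simpa using this.tendsto.mono_left nhdsWithin_le_nhds
  have := (hasDerivAt_iff_tendsto_slope.1 hc).mul hmul_log
  rw [mul_zero] at this
  refine this.congr' ?_
  filter_upwards [self_mem_nhdsWithin] with x hx
  rw [slope_def_field, hca, sub_zero]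
  field_simp [sub_ne_zero.2 hx]

lemma piecewisePV_eq {a₁ a₂ : ℝ} (h₁ : a₁ ≠ 0) (h₂ : 0 < a₂) (α x : ℝ) :
    piecewisePV a₁ a₂ α x
      = 2 * x * (arctan (1 / a₁) / (a₁ * (a₁ ^ 2 + x ^ 2))
          + α * arctan a₂ / (a₂ * (a₂ ^ 2 + x ^ 2)))
        + ((a₁ ^ 2 + x ^ 2)⁻¹ - α * (a₂ ^ 2 + x ^ 2)⁻¹) * (log (x + 1) - log (x - 1)) := by
  have := arctan_inv_of_pos h₂
  simp only [piecewisePV, lorentzPrimitive, lorentzPrimitiveReg, neg_div, arctan_neg, neg_one_sq,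
    sub_neg_eq_add, one_div, this]
  field_simp
  ring

lemma tendsto_piecewisePV {a₁ a₂ α : ℝ} (h₁ : 0 < a₁) (h₂ : 0 < a₂)
    (hα : α = (a₂ ^ 2 + 1) / (a₁ ^ 2 + 1)) :
    Tendsto (piecewisePV a₁ a₂ α) (𝓝[<] 1)
      (𝓝 (2 * arctan (1 / a₁) / (a₁ * (a₁ ^ 2 + 1))
        + 2 * α * arctan a₂ / (a₂ * (a₂ ^ 2 + 1)))) := by
  set c := fun x : ℝ => (a₁ ^ 2 + x ^ 2)⁻¹ - α * (a₂ ^ 2 + x ^ 2)⁻¹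
  have hc1 : c 1 = 0 := by
    simp only [c, hα]
    field_simp
    ring
  have hc : DifferentiableAt ℝ c 1 := by fun_prop (disch := positivity)
  have hsing : Tendsto (fun x => c x * log (x - 1)) (𝓝[<] 1) (𝓝 0) :=
    (tendsto_mul_log_sub_of_hasDerivAt hc.hasDerivAt hc1).mono_left (nhdsLT_le_nhdsNE 1)
  have hreg : ContinuousAt (fun x => 2 * x * (arctan (1 / a₁) / (a₁ * (a₁ ^ 2 + x ^ 2))
      + α * arctan a₂ / (a₂ * (a₂ ^ 2 + x ^ 2))) + c x * log (x + 1)) 1 := by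
    fun_prop (disch := positivity)
  have := (hreg.tendsto.mono_left nhdsWithin_le_nhds).sub hsing
  rw [hc1, zero_mul, add_zero, sub_zero] at this
  convert this using 2 with x
  · rw [piecewisePV_eq h₁.ne' h₂]
    ring
  · ring

/-- With `α = (a₂² + 1)/(a₁² + 1)` (so that the piecewise function `f`
is continuous), the principal value `h(x) = PV∫_ℝ f(y)/(x−y) dy` exists for every
`x ∈ (−1,1)` and has the finite one-sided limit
`2·arctan(1/a₁)/(a₁·(a₁² + 1)) + 2α·arctan(a₂)/(a₂·(a₂² + 1))` as `x → 1⁻`. -/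
theorem pv_continuous_piecewise_limit (a₁ a₂ α : ℝ) (h₁ : 0 < a₁) (h₂ : 0 < a₂)
    (hα : α = (a₂ ^ 2 + 1) / (a₁ ^ 2 + 1)) :
    ∃ h : ℝ → ℝ,
      (∀ x ∈ Ioo (-1 : ℝ) 1,
        Tendsto
          (fun ε : ℝ => ∫ y in {y : ℝ | ε < |y - x|},
            (if |y| ≤ 1 then 1 / (a₁ ^ 2 + y ^ 2) else α / (a₂ ^ 2 + y ^ 2)) / (x - y))
          (𝓝[>] 0) (𝓝 (h x)))
      ∧ Tendsto h (𝓝[<] (1 : ℝ))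
          (𝓝 (2 * Real.arctan (1 / a₁) / (a₁ * (a₁ ^ 2 + 1))
            + 2 * α * Real.arctan a₂ / (a₂ * (a₂ ^ 2 + 1)))) :=
  ⟨piecewisePV a₁ a₂ α, fun _ hx => tendsto_integral_truncated a₁ a₂ α h₁ h₂ hx,
    tendsto_piecewisePV h₁ h₂ hα⟩
end

section
/- Let Q(ξ) = 4/(1 + ξ²), so that Q'(y) = −8y/(1 + y²)². Then for every ξ ∈ ℝ the principal value PV∫_ℝ Q'(y)/(ξ−y) dy exists and equals π·( Q(ξ)²/2 − Q(ξ) ) = 4π·(1 − ξ²)/(1 + ξ²)². Equivalently, Q satisfies the Benjamin–Ono solitary-wave equation −Q(ξ) − (1/π)·PV∫_ℝ Q'(y)/(ξ−y) dy + Q(ξ)²/2 = 0 with speed c = 1 (the case m = 2), i.e. Q is the Benjamin–Ono soliton. -/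
/-!
Partial fractions give an explicit primitive `F` of `Q'(y)/(ξ - y)` on `ℝ ∖ {ξ}`: a continuous
function plus `8ξ/(1+ξ²)² · log |ξ - y|`. The logarithmic singularity is symmetric about `ξ`, so it
cancels in `F(ξ - ε) - F(ξ + ε)`, and the principal value is `F(+∞) - F(-∞)`. At infinity the
logarithms of `F` cancel against each other and its rational part vanishes, so only its arctangent
term `4(1 - ξ²)/(1 + ξ²)² · arctan y` contributes, giving `4π(1 - ξ²)/(1 + ξ²)²`.
-/

open MeasureTheory Filter Set Topology Real Bornology

theorem setOf_lt_abs_sub_eq_Iio_union_Ioi (ξ ε : ℝ) :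
    {y : ℝ | ε < |y - ξ|} = Iio (ξ - ε) ∪ Ioi (ξ + ε) := by
  ext y
  simp only [mem_ofPred_eq, mem_union, mem_Iio, mem_Ioi, lt_abs]
  constructor <;> rintro (h | h) <;> [right; left; right; left] <;> linarith

theorem tendsto_setIntegral_lt_abs_sub_of_hasDerivAt {f F : ℝ → ℝ} {ξ a b L : ℝ}
    (hF : ∀ y ≠ ξ, HasDerivAt F (f y) y)
    (hf : ∀ ε > 0, IntegrableOn f {y | ε < |y - ξ|})
    (hbot : Tendsto F atBot (𝓝 a)) (htop : Tendsto F atTop (𝓝 b))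
    (hsymm : Tendsto (fun ε => F (ξ - ε) - F (ξ + ε)) (𝓝[>] 0) (𝓝 L)) :
    Tendsto (fun ε => ∫ y in {y | ε < |y - ξ|}, f y) (𝓝[>] 0) (𝓝 (b - a + L)) := by
  refine (hsymm.const_add (b - a)).congr' ?_
  filter_upwards [self_mem_nhdsWithin] with ε (hε : 0 < ε)
  symm
  have hint := hf ε hε
  rw [setOf_lt_abs_sub_eq_Iio_union_Ioi] at hint ⊢
  have hleft : ∫ y in Iio (ξ - ε), f y = F (ξ - ε) - a := by
    rw [← integral_Iic_eq_integral_Iio]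
    exact integral_Iic_of_hasDerivAt_of_tendsto'
      (fun y hy => hF y (by rw [mem_Iic] at hy; linarith))
      ((integrableOn_Iic_iff_integrableOn_Iio).2 (hint.mono_set subset_union_left)) hbot
  have hright : ∫ y in Ioi (ξ + ε), f y = b - F (ξ + ε) :=
    integral_Ioi_of_hasDerivAt_of_tendsto'
      (fun y hy => hF y (by rw [mem_Ici] at hy; linarith))
      (hint.mono_set subset_union_right) htop
  have hdisj : Disjoint (Iio (ξ - ε)) (Ioi (ξ + ε)) :=
    (Iic_disjoint_Ioi (by linarith)).mono_left Iio_subset_Iic_self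
  rw [setIntegral_union hdisj measurableSet_Ioi (hint.mono_set subset_union_left)
    (hint.mono_set subset_union_right), hleft, hright]
  ring

noncomputable def solitonPrimitiveRegular (ξ y : ℝ) : ℝ :=
  -4 * ξ / (1 + ξ ^ 2) ^ 2 * log (1 + y ^ 2) + 4 * (1 - ξ ^ 2) / (1 + ξ ^ 2) ^ 2 * arctan y
    + 4 * (y + ξ) / ((1 + ξ ^ 2) * (1 + y ^ 2))

/-- `Real.log` is even, so the last term is `log |ξ - y|` on both sides of `ξ`. -/
noncomputable def solitonPrimitive (ξ y : ℝ) : ℝ :=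
  solitonPrimitiveRegular ξ y + 8 * ξ / (1 + ξ ^ 2) ^ 2 * log (ξ - y)

theorem continuous_solitonPrimitiveRegular (ξ : ℝ) : Continuous (solitonPrimitiveRegular ξ) := by
  unfold solitonPrimitiveRegular
  fun_prop (disch := intro; positivity)

theorem hasDerivAt_solitonPrimitive {ξ y : ℝ} (hy : y ≠ ξ) :
    HasDerivAt (solitonPrimitive ξ) (-8 * y / (1 + y ^ 2) ^ 2 / (ξ - y)) y := by
  have hξy : ξ - y ≠ 0 := sub_ne_zero.2 hy.symm
  have h1y : 1 + y ^ 2 ≠ 0 := by positivity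
  have hsq : HasDerivAt (fun y : ℝ => 1 + y ^ 2) (2 * y) y := by
    simpa using (hasDerivAt_pow 2 y).const_add 1
  have hlin : HasDerivAt (fun y : ℝ => ξ - y) (-1) y := by
    simpa using (hasDerivAt_id y).const_sub ξ
  have H := (((hsq.log h1y).const_mul (-4 * ξ / (1 + ξ ^ 2) ^ 2)).add
    ((hasDerivAt_arctan y).const_mul (4 * (1 - ξ ^ 2) / (1 + ξ ^ 2) ^ 2))).add
    ((((hasDerivAt_id' y).add_const ξ).const_mul 4).div (hsq.const_mul (1 + ξ ^ 2))
      (by positivity)) |>.add ((hlin.log hξy).const_mul (8 * ξ / (1 + ξ ^ 2) ^ 2))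
  refine H.congr_deriv ?_
  field_simp
  ring

theorem tendsto_solitonPrimitive_sub_arctan (ξ : ℝ) :
    Tendsto (fun y => solitonPrimitive ξ y - 4 * (1 - ξ ^ 2) / (1 + ξ ^ 2) ^ 2 * arctan y)
      (cobounded ℝ) (𝓝 0) := by
  -- the left-hand side, written in terms of `t = y⁻¹`
  set G : ℝ → ℝ := fun t => -4 * ξ / (1 + ξ ^ 2) ^ 2 * log ((t ^ 2 + 1) / (ξ * t - 1) ^ 2)
    + 4 * (t + ξ * t ^ 2) / ((1 + ξ ^ 2) * (t ^ 2 + 1))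
  have hG : ContinuousAt G 0 := by
    simp only [G]
    fun_prop (disch := norm_num <;> positivity)
  have hG0 : G 0 = 0 := by simp [G]
  rw [← hG0]
  refine (hG.tendsto.comp tendsto_inv₀_cobounded).congr' ?_
  have hfin : ({0, ξ} : Set ℝ)ᶜ ∈ cobounded ℝ := (toFinite {0, ξ}).isBounded
  filter_upwards [hfin] with y hy
  simp only [mem_compl_iff, mem_insert_iff, mem_singleton_iff, not_or] at hy
  obtain ⟨hy0, hyξ⟩ := hy
  have hξy : ξ - y ≠ 0 := sub_ne_zero.2 (Ne.symm hyξ)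
  have h1y : 1 + y ^ 2 ≠ 0 := by positivity
  have hlog : log ((y⁻¹ ^ 2 + 1) / (ξ * y⁻¹ - 1) ^ 2) = log (1 + y ^ 2) - 2 * log (ξ - y) := by
    rw [show (y⁻¹ ^ 2 + 1) / (ξ * y⁻¹ - 1) ^ 2 = (1 + y ^ 2) / (ξ - y) ^ 2 by field_simp,
      log_div h1y (pow_ne_zero 2 hξy), log_pow]
    push_cast; ring
  simp only [Function.comp, G, hlog, solitonPrimitive, solitonPrimitiveRegular]
  field_simp
  ring

theorem tendsto_solitonPrimitive {ξ A : ℝ} {l : Filter ℝ} (hl : l ≤ cobounded ℝ)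
    (harctan : Tendsto arctan l (𝓝 A)) :
    Tendsto (solitonPrimitive ξ) l (𝓝 (4 * (1 - ξ ^ 2) / (1 + ξ ^ 2) ^ 2 * A)) := by
  have h := ((tendsto_solitonPrimitive_sub_arctan ξ).mono_left hl).add
    (harctan.const_mul (4 * (1 - ξ ^ 2) / (1 + ξ ^ 2) ^ 2))
  simp only [sub_add_cancel, zero_add] at h
  exact h

theorem tendsto_solitonPrimitive_sub_sub_add_nhds_zero (ξ : ℝ) :
    Tendsto (fun ε => solitonPrimitive ξ (ξ - ε) - solitonPrimitive ξ (ξ + ε)) (𝓝 0) (𝓝 0) := by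
  have hR := continuous_solitonPrimitiveRegular ξ
  have h : Tendsto (fun ε => solitonPrimitiveRegular ξ (ξ - ε) - solitonPrimitiveRegular ξ (ξ + ε))
      (𝓝 0) (𝓝 (solitonPrimitiveRegular ξ (ξ - 0) - solitonPrimitiveRegular ξ (ξ + 0))) :=
    ((hR.comp (continuous_sub_left ξ)).sub (hR.comp (continuous_const_add ξ))).tendsto 0
  rw [sub_zero, add_zero, sub_self] at h
  refine h.congr fun ε => ?_
  simp only [solitonPrimitive, sub_sub_cancel, show ξ - (ξ + ε) = -ε by ring, log_neg_eq_log]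
  ring

theorem integrableOn_soliton_deriv_div_sub {ξ ε : ℝ} (hε : 0 < ε) :
    IntegrableOn (fun y => -8 * y / (1 + y ^ 2) ^ 2 / (ξ - y)) {y | ε < |y - ξ|} := by
  refine Integrable.mono' ((integrable_inv_one_add_sq.const_mul (8 / ε)).integrableOn)
    (by fun_prop : Measurable _).aestronglyMeasurable
    ((ae_restrict_iff' (measurableSet_lt measurable_const (by fun_prop))).2 (ae_of_all _ ?_))
  intro y (hy : ε < |y - ξ|)
  have h1y : 0 < 1 + y ^ 2 := by positivity
  have hy1 : |y| ≤ 1 + y ^ 2 := by nlinarith [abs_nonneg y, sq_abs y, sq_nonneg (|y| - 1)]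
  rw [Real.norm_eq_abs, abs_div, abs_div, abs_mul, abs_sub_comm, abs_of_pos (pow_pos h1y 2)]
  calc |(-8 : ℝ)| * |y| / (1 + y ^ 2) ^ 2 / |y - ξ| = 8 * |y| / ((1 + y ^ 2) ^ 2 * |y - ξ|) := by
        norm_num [div_div]
    _ ≤ 8 * (1 + y ^ 2) / ((1 + y ^ 2) ^ 2 * ε) := by gcongr
    _ = 8 / ε * (1 + y ^ 2)⁻¹ := by field_simp

/-- For `Q(ξ) = 4/(1 + ξ²)`, so `Q'(y) = −8y/(1 + y²)²`, and every
`ξ ∈ ℝ`, the principal value `PV∫_ℝ Q'(y)/(ξ−y) dy` exists and equals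
`π·(Q(ξ)²/2 − Q(ξ)) = 4π·(1 − ξ²)/(1 + ξ²)²`; i.e. `Q` satisfies the speed-1
Benjamin–Ono solitary-wave equation `−Q − H(Q') + Q²/2 = 0`. -/
theorem benjamin_ono_soliton (ξ : ℝ) :
    Tendsto
      (fun ε : ℝ => ∫ y in {y : ℝ | ε < |y - ξ|}, (-8 * y / (1 + y ^ 2) ^ 2) / (ξ - y))
      (𝓝[>] 0)
      (𝓝 (Real.pi * ((4 / (1 + ξ ^ 2)) ^ 2 / 2 - 4 / (1 + ξ ^ 2))))
    ∧ Real.pi * ((4 / (1 + ξ ^ 2)) ^ 2 / 2 - 4 / (1 + ξ ^ 2))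
        = 4 * Real.pi * (1 - ξ ^ 2) / (1 + ξ ^ 2) ^ 2 := by
  have hpv := tendsto_setIntegral_lt_abs_sub_of_hasDerivAt
    (fun y hy => hasDerivAt_solitonPrimitive hy)
    (fun ε hε => integrableOn_soliton_deriv_div_sub hε)
    (tendsto_solitonPrimitive IsOrderBornology.atBot_le_cobounded
      (tendsto_arctan_atBot.mono_right nhdsWithin_le_nhds))
    (tendsto_solitonPrimitive IsOrderBornology.atTop_le_cobounded
      (tendsto_arctan_atTop.mono_right nhdsWithin_le_nhds))
    ((tendsto_solitonPrimitive_sub_sub_add_nhds_zero ξ).mono_left nhdsWithin_le_nhds)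
  have hvalue : 4 * (1 - ξ ^ 2) / (1 + ξ ^ 2) ^ 2 * (π / 2)
      - 4 * (1 - ξ ^ 2) / (1 + ξ ^ 2) ^ 2 * -(π / 2) + 0
      = π * ((4 / (1 + ξ ^ 2)) ^ 2 / 2 - 4 / (1 + ξ ^ 2)) := by
    field_simp
    ring
  exact ⟨hvalue ▸ hpv, by field_simp; ring⟩
end
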